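/- Let ξ₁ and ξ₂ be real random variables on a common probability space (not assumed independent), with ξ_i subgaussian of order σ_i², σ_i > 0, for i = 1, 2. Then E[e^{γ ξ₁ ξ₂}] ≤ 3 for every γ with 0 < γ ≤ 1/(4 σ₁ σ₂). -/

import Mathlib

open MeasureTheory Real

/-!
Completing the square writes `e^{x²/(4v)}` as a Gaussian average of `e^{xt - vt²}` over `t`.
Exchanging the two integrals and applying the subgaussian bound to `E e^{tξ}` for each `t` gives
`E e^{ξ²/(4v)} ≤ √2` whenever `ξ` is subgaussian of order `v`; no independence enters.
For the product, `γ ξ₁ ξ₂ ≤ ξ₁²/(8σ₁²) + ξ₂²/(8σ₂²)` by AM-GM, and `e^{a+b} ≤ e^{2a} + e^{2b}`,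
so the expectation is at most `2√2 ≤ 3`.
-/

/-- A real random variable `ξ` is subgaussian of order `σ²` if
`log E[e^{θξ}] ≤ σ²θ²/2` for every `θ ∈ ℝ`. -/
def Subgaussian {Ω : Type*} [MeasurableSpace Ω] (μ : Measure Ω) (ξ : Ω → ℝ) (σ2 : ℝ) : Prop :=
  ∀ θ : ℝ, ∫⁻ a, ENNReal.ofReal (Real.exp (θ * ξ a)) ∂μ
    ≤ ENNReal.ofReal (Real.exp (σ2 * θ ^ 2 / 2))

lemma lintegral_ofReal_exp_neg_mul_sq {b : ℝ} (hb : 0 < b) :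
    ∫⁻ t : ℝ, ENNReal.ofReal (exp (-b * t ^ 2)) = ENNReal.ofReal √(π / b) := by
  rw [← ofReal_integral_eq_lintegral_ofReal (integrable_exp_neg_mul_sq hb)
    (.of_forall fun _ => (exp_pos _).le), integral_gaussian]

lemma ofReal_exp_sq_div_mul_sqrt_eq_lintegral {v : ℝ} (hv : 0 < v) (x : ℝ) :
    ENNReal.ofReal (exp (x ^ 2 / (4 * v))) * ENNReal.ofReal √(π / v)
      = ∫⁻ t : ℝ, ENNReal.ofReal (exp (x * t - v * t ^ 2)) := by
  have complete_square (t : ℝ) :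
      x * t - v * t ^ 2 = x ^ 2 / (4 * v) + -v * (t - x / (2 * v)) ^ 2 := by
    field_simp; ring
  simp_rw [complete_square, exp_add, ENNReal.ofReal_mul (exp_pos _).le]
  rw [lintegral_const_mul' _ _ ENNReal.ofReal_ne_top,
    lintegral_sub_right_eq_self (fun t => ENNReal.ofReal (exp (-v * t ^ 2))),
    lintegral_ofReal_exp_neg_mul_sq hv]

namespace Subgaussian

variable {Ω : Type*} [MeasurableSpace Ω] {μ : Measure Ω} {ξ : Ω → ℝ} {v : ℝ}

lemma lintegral_exp_mul_sub_le (hsub : Subgaussian μ ξ v) (t : ℝ) :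
    ∫⁻ a, ENNReal.ofReal (exp (ξ a * t - v * t ^ 2)) ∂μ
      ≤ ENNReal.ofReal (exp (-(v / 2) * t ^ 2)) := by
  have split (a : Ω) : exp (ξ a * t - v * t ^ 2) = exp (t * ξ a) * exp (-v * t ^ 2) := by
    rw [← exp_add]; ring_nf
  simp_rw [split, ENNReal.ofReal_mul (exp_pos _).le]
  rw [lintegral_mul_const' _ _ ENNReal.ofReal_ne_top]
  calc (∫⁻ a, ENNReal.ofReal (exp (t * ξ a)) ∂μ) * ENNReal.ofReal (exp (-v * t ^ 2))
      ≤ ENNReal.ofReal (exp (v * t ^ 2 / 2)) * ENNReal.ofReal (exp (-v * t ^ 2)) :=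
        mul_le_mul_left (hsub t) _
    _ = ENNReal.ofReal (exp (-(v / 2) * t ^ 2)) := by
        rw [← ENNReal.ofReal_mul (exp_pos _).le, ← exp_add]; ring_nf

theorem lintegral_exp_sq_div_le [SFinite μ] (hξ : Measurable ξ) (hv : 0 < v)
    (hsub : Subgaussian μ ξ v) :
    ∫⁻ a, ENNReal.ofReal (exp (ξ a ^ 2 / (4 * v))) ∂μ ≤ ENNReal.ofReal √2 := by
  set K := ENNReal.ofReal √(π / v) with hK
  have hK0 : K ≠ 0 := by simp only [K, ne_eq, ENNReal.ofReal_eq_zero, not_le]; positivity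
  have hmeas : Measurable (Function.uncurry fun a (t : ℝ) =>
      ENNReal.ofReal (exp (ξ a * t - v * t ^ 2))) := by fun_prop
  refine (ENNReal.mul_le_mul_iff_left hK0 ENNReal.ofReal_ne_top).mp ?_
  calc (∫⁻ a, ENNReal.ofReal (exp (ξ a ^ 2 / (4 * v))) ∂μ) * K
      = ∫⁻ a, (∫⁻ t : ℝ, ENNReal.ofReal (exp (ξ a * t - v * t ^ 2))) ∂μ := by
        rw [← lintegral_mul_const' _ _ ENNReal.ofReal_ne_top]
        simp_rw [ofReal_exp_sq_div_mul_sqrt_eq_lintegral hv]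
    _ = ∫⁻ t : ℝ, ∫⁻ a, ENNReal.ofReal (exp (ξ a * t - v * t ^ 2)) ∂μ :=
        lintegral_lintegral_swap hmeas.aemeasurable
    _ ≤ ∫⁻ t : ℝ, ENNReal.ofReal (exp (-(v / 2) * t ^ 2)) :=
        lintegral_mono hsub.lintegral_exp_mul_sub_le
    _ = ENNReal.ofReal √2 * K := by
        rw [lintegral_ofReal_exp_neg_mul_sq (by positivity), hK,
          ← ENNReal.ofReal_mul (sqrt_nonneg _), ← sqrt_mul zero_le_two]
        congr 2
        field_simp

end Subgaussian

lemma mul_mul_le_sq_div_add_sq_div {γ s t : ℝ} (hs : 0 < s) (ht : 0 < t) (hγ0 : 0 ≤ γ)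
    (hγ : γ ≤ 1 / (4 * s * t)) (x y : ℝ) :
    γ * x * y ≤ x ^ 2 / (8 * s ^ 2) + y ^ 2 / (8 * t ^ 2) := by
  have amgm := two_mul_le_add_sq (|x| / s) (|y| / t)
  calc γ * x * y ≤ γ * (|x| * |y|) := by
        rw [mul_assoc, ← abs_mul]; exact mul_le_mul_of_nonneg_left (le_abs_self _) hγ0
    _ ≤ 1 / (4 * s * t) * (|x| * |y|) := by gcongr
    _ = (|x| / s) * (|y| / t) / 4 := by field_simp
    _ ≤ ((|x| / s) ^ 2 + (|y| / t) ^ 2) / 8 := by linarith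
    _ = x ^ 2 / (8 * s ^ 2) + y ^ 2 / (8 * t ^ 2) := by
        rw [div_pow, div_pow, sq_abs, sq_abs]; ring

lemma exp_add_le_exp_two_mul_add_exp_two_mul (a b : ℝ) :
    exp (a + b) ≤ exp (2 * a) + exp (2 * b) := by
  have amgm := two_mul_le_add_sq (exp a) (exp b)
  rw [exp_add, two_mul, two_mul, exp_add, exp_add, ← sq, ← sq]
  nlinarith [mul_pos (exp_pos a) (exp_pos b)]

lemma exp_mul_mul_le_add {γ s t : ℝ} (hs : 0 < s) (ht : 0 < t) (hγ0 : 0 ≤ γ)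
    (hγ : γ ≤ 1 / (4 * s * t)) (x y : ℝ) :
    exp (γ * x * y) ≤ exp (x ^ 2 / (4 * s ^ 2)) + exp (y ^ 2 / (4 * t ^ 2)) :=
  calc exp (γ * x * y) ≤ exp (x ^ 2 / (8 * s ^ 2) + y ^ 2 / (8 * t ^ 2)) :=
        exp_le_exp.mpr (mul_mul_le_sq_div_add_sq_div hs ht hγ0 hγ x y)
    _ ≤ exp (2 * (x ^ 2 / (8 * s ^ 2))) + exp (2 * (y ^ 2 / (8 * t ^ 2))) :=
        exp_add_le_exp_two_mul_add_exp_two_mul _ _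
    _ = exp (x ^ 2 / (4 * s ^ 2)) + exp (y ^ 2 / (4 * t ^ 2)) := by ring_nf

/-- Lemma H.2.2: if `ξ₁, ξ₂` are subgaussian of orders `σ₁², σ₂²` (not assumed independent),
then `E[e^{γ ξ₁ ξ₂}] ≤ 3` for every `0 < γ ≤ 1/(4σ₁σ₂)`. -/
theorem subgaussian_exp_product {Ω : Type*} [MeasurableSpace Ω]
    (μ : Measure Ω) [IsProbabilityMeasure μ]
    (ξ₁ ξ₂ : Ω → ℝ) (hξ₁ : Measurable ξ₁) (hξ₂ : Measurable ξ₂)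
    (σ₁ σ₂ : ℝ) (hσ₁ : 0 < σ₁) (hσ₂ : 0 < σ₂)
    (hsub₁ : Subgaussian μ ξ₁ (σ₁ ^ 2)) (hsub₂ : Subgaussian μ ξ₂ (σ₂ ^ 2))
    (γ : ℝ) (hγ0 : 0 < γ) (hγ : γ ≤ 1 / (4 * σ₁ * σ₂)) :
    ∫⁻ a, ENNReal.ofReal (Real.exp (γ * ξ₁ a * ξ₂ a)) ∂μ ≤ 3 := by
  have sqrt_two_add_sqrt_two_le : √2 + √2 ≤ (3 : ℝ) := by
    nlinarith [sq_sqrt (zero_le_two (α := ℝ)), sqrt_nonneg 2]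
  calc ∫⁻ a, ENNReal.ofReal (exp (γ * ξ₁ a * ξ₂ a)) ∂μ
      ≤ ∫⁻ a, (ENNReal.ofReal (exp (ξ₁ a ^ 2 / (4 * σ₁ ^ 2)))
          + ENNReal.ofReal (exp (ξ₂ a ^ 2 / (4 * σ₂ ^ 2)))) ∂μ := by
        refine lintegral_mono fun a => ?_
        rw [← ENNReal.ofReal_add (exp_pos _).le (exp_pos _).le]
        exact ENNReal.ofReal_le_ofReal (exp_mul_mul_le_add hσ₁ hσ₂ hγ0.le hγ _ _)
    _ = (∫⁻ a, ENNReal.ofReal (exp (ξ₁ a ^ 2 / (4 * σ₁ ^ 2))) ∂μ)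
        + ∫⁻ a, ENNReal.ofReal (exp (ξ₂ a ^ 2 / (4 * σ₂ ^ 2))) ∂μ :=
        lintegral_add_left (by fun_prop) _
    _ ≤ ENNReal.ofReal √2 + ENNReal.ofReal √2 :=
        add_le_add (hsub₁.lintegral_exp_sq_div_le hξ₁ (by positivity))
          (hsub₂.lintegral_exp_sq_div_le hξ₂ (by positivity))
    _ ≤ 3 := by
        rw [← ENNReal.ofReal_add (sqrt_nonneg _) (sqrt_nonneg _)]
        exact (ENNReal.ofReal_le_ofReal sqrt_two_add_sqrt_two_le).trans (ENNReal.ofReal_ofNat 3).le
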